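/- arXiv:1701.06678 — 3 statements merged into one kernel-verified Lean document; each statement's English description precedes it below -/
import Mathlib

section
/- Generalized Fano inequality: for a variable-length coding scheme with message W uniform on {1,...,M}, posterior entropy H_t = H(W | F_t), an almost surely finite stopping time T, and decoder output Ŵ measurable with respect to F_T, the expected stopping-time entropy satisfies E[H_T] ≤ h(P_e) + P_e · log(M−1), where P_e = P(Ŵ ≠ W) and h is the binary entropy function. -/
open MeasureTheory Filter

/-!
At every time the posterior `Π_t` is a.e. a probability vector, so the finite Fano inequality
bounds `H_T` pointwise by `h(E) + E log (M - 1)`, where `E = 1 - Π_T(Ŵ)` is the error probability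
conditional on `F_T`. Because `Ŵ` is `F_T`-measurable, `E[Π_T(Ŵ)] = P(Ŵ = W)`, i.e. `E[E] = P_e`,
and Jensen's inequality for the concave `h` concludes.
-/

namespace Real

theorem sum_negMulLog_le_negMulLog_sum_add_mul_log_card {ι : Type*} (s : Finset ι) {p : ι → ℝ}
    (hp : ∀ i ∈ s, 0 ≤ p i) :
    ∑ i ∈ s, negMulLog (p i) ≤ negMulLog (∑ i ∈ s, p i) + (∑ i ∈ s, p i) * log s.card := by
  rcases s.eq_empty_or_nonempty with rfl | hs
  · simp
  set n : ℝ := (s.card : ℝ)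
  have hn : 0 < n := by simpa [n] using hs.card_pos
  have jensen := concaveOn_negMulLog.le_map_sum (t := s) (w := fun _ => n⁻¹) (p := p)
    (fun _ _ => by positivity) (by simp [n, hn.ne']) hp
  simp only [smul_eq_mul, ← Finset.mul_sum] at jensen
  rw [mul_comm, negMulLog_mul, negMulLog, log_inv] at jensen
  refine le_of_mul_le_mul_left ?_ (inv_pos.2 hn)
  linarith

theorem sum_negMulLog_le_binEntropy_add_mul_log {ι : Type*} [Fintype ι] {p : ι → ℝ}
    (hp : p ∈ stdSimplex ℝ ι) (j : ι) :
    ∑ i, negMulLog (p i) ≤ binEntropy (1 - p j) + (1 - p j) * log (Fintype.card ι - 1) := by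
  classical
  have hrest : ∑ i ∈ Finset.univ.erase j, p i = 1 - p j := by
    rw [← hp.2, ← Finset.add_sum_erase _ _ (Finset.mem_univ j), add_sub_cancel_left]
  have hcard : ((Finset.univ.erase j).card : ℝ) = Fintype.card ι - 1 := by
    rw [Finset.card_erase_of_mem (Finset.mem_univ j), Finset.card_univ,
      Nat.cast_sub (Fintype.card_pos_iff.2 ⟨j⟩), Nat.cast_one]
  have hbound := sum_negMulLog_le_negMulLog_sum_add_mul_log_card (Finset.univ.erase j)
    (p := p) fun i _ => hp.1 i
  rw [hrest, hcard] at hbound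
  rw [← Finset.add_sum_erase _ _ (Finset.mem_univ j), binEntropy_one_sub,
    binEntropy_eq_negMulLog_add_negMulLog_one_sub]
  linarith

section Integral

variable {Ω : Type*} {m : MeasurableSpace Ω} {μ : Measure Ω} {X : Ω → ℝ}

theorem integrable_binEntropy_comp [IsFiniteMeasure μ] (hX : AEStronglyMeasurable X μ)
    (hX01 : ∀ᵐ ω ∂μ, X ω ∈ Set.Icc 0 1) : Integrable (fun ω => binEntropy (X ω)) μ := by
  refine Integrable.of_bound (binEntropy_continuous.comp_aestronglyMeasurable hX) (log 2) ?_
  filter_upwards [hX01] with ω hω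
  rw [Real.norm_of_nonneg (binEntropy_nonneg hω.1 hω.2)]
  exact binEntropy_le_log_two

variable [IsProbabilityMeasure μ]

theorem integral_binEntropy_le (hX : Integrable X μ) (hX01 : ∀ᵐ ω ∂μ, X ω ∈ Set.Icc 0 1) :
    ∫ ω, binEntropy (X ω) ∂μ ≤ binEntropy (∫ ω, X ω ∂μ) :=
  strictConcave_binEntropy.concaveOn.le_map_integral binEntropy_continuous.continuousOn
    isClosed_Icc hX01 hX (integrable_binEntropy_comp hX.aestronglyMeasurable hX01)

theorem integral_le_binEntropy_integral_add_mul {Y : Ω → ℝ} (c : ℝ) (hX : 0 ≤ᵐ[μ] X)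
    (hY : Integrable Y μ) (hY01 : ∀ᵐ ω ∂μ, Y ω ∈ Set.Icc 0 1)
    (hXY : ∀ᵐ ω ∂μ, X ω ≤ binEntropy (Y ω) + Y ω * c) :
    ∫ ω, X ω ∂μ ≤ binEntropy (∫ ω, Y ω ∂μ) + (∫ ω, Y ω ∂μ) * c := by
  have hHY := integrable_binEntropy_comp hY.aestronglyMeasurable hY01
  calc ∫ ω, X ω ∂μ ≤ ∫ ω, binEntropy (Y ω) + Y ω * c ∂μ :=
        integral_mono_of_nonneg hX (hHY.add (hY.mul_const c)) hXY
    _ = ∫ ω, binEntropy (Y ω) ∂μ + (∫ ω, Y ω ∂μ) * c := by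
        rw [integral_add hHY (hY.mul_const c), integral_mul_const]
    _ ≤ binEntropy (∫ ω, Y ω ∂μ) + (∫ ω, Y ω ∂μ) * c := by
        gcongr
        exact integral_binEntropy_le hY hY01

end Integral

end Real

section Posterior

variable {Ω ι : Type*} {m m0 : MeasurableSpace Ω} {P : Measure Ω}

theorem integral_eq_of_setIntegral_fiber_eq {α : Type*} [Countable α] [MeasurableSpace α]
    [MeasurableSingletonClass α] {τ : Ω → α} (hτ : Measurable τ) {f g : Ω → ℝ}
    (hf : Integrable f P) (hg : Integrable g P)
    (hfg : ∀ a, ∫ ω in τ ⁻¹' {a}, f ω ∂P = ∫ ω in τ ⁻¹' {a}, g ω ∂P) :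
    ∫ ω, f ω ∂P = ∫ ω, g ω ∂P := by
  have hunion : (⋃ a, τ ⁻¹' {a}) = Set.univ := by
    ext ω
    simp
  have hsum : ∀ h : Ω → ℝ, Integrable h P → ∫ ω, h ω ∂P = ∑' a, ∫ ω in τ ⁻¹' {a}, h ω ∂P :=
    fun h hh => by
      rw [← setIntegral_univ, ← hunion, integral_iUnion (fun a => hτ (measurableSet_singleton a))
        (pairwise_disjoint_fiber τ) hh.integrableOn]
  rw [hsum f hf, hsum g hg]
  exact tsum_congr hfg

variable {ℱ : Filtration ℕ m0} {T : Ω → ℕ}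

theorem MeasureTheory.IsStoppingTime.measurable_of_coe
    (hT : IsStoppingTime ℱ fun ω => (T ω : WithTop ℕ)) : Measurable T :=
  (measurable_of_countable (WithTop.untopD 0)).comp hT.measurable'

variable [Fintype ι] [MeasurableSpace ι] [MeasurableSingletonClass ι]

noncomputable def posterior (P : Measure Ω) (m : MeasurableSpace Ω) (W : Ω → ι) (i : ι) :
    Ω → ℝ :=
  P[Set.indicator {ω | W ω = i} (fun _ => (1 : ℝ)) | m]

theorem ae_posterior_mem_stdSimplex [IsFiniteMeasure P] (hm : m ≤ m0) {W : Ω → ι}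
    (hW : Measurable W) : ∀ᵐ ω ∂P, (fun i => posterior P m W i ω) ∈ stdSimplex ℝ ι := by
  classical
  have hint : ∀ i, Integrable ({ω | W ω = i}.indicator fun _ => (1 : ℝ)) P := fun i =>
    (integrable_const 1).indicator (hW (measurableSet_singleton i))
  have hsum : ∑ i, {ω | W ω = i}.indicator (fun _ => (1 : ℝ)) = fun _ => 1 := by
    ext ω
    simp [Set.indicator_apply]
  have hnonneg : ∀ᵐ ω ∂P, ∀ i, 0 ≤ posterior P m W i ω :=
    ae_all_iff.2 fun i => condExp_nonneg (ae_of_all _ (Set.indicator_nonneg fun _ _ => zero_le_one))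
  have hsum_condExp := condExp_finsetSum (μ := P) (s := Finset.univ) (fun i _ => hint i) m
  rw [hsum, condExp_const hm] at hsum_condExp
  filter_upwards [hnonneg, hsum_condExp] with ω hω hω_sum
  exact ⟨hω, by simpa [posterior] using hω_sum.symm⟩

theorem ae_posterior_stopped_mem_stdSimplex [IsFiniteMeasure P] {W : Ω → ι}
    (hW : Measurable W) :
    ∀ᵐ ω ∂P, (fun i => posterior P (ℱ (T ω)) W i ω) ∈ stdSimplex ℝ ι := by
  filter_upwards [ae_all_iff.2 fun t => ae_posterior_mem_stdSimplex (P := P) (ℱ.le t) hW]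
    with ω hω using hω (T ω)

theorem measurable_posterior_stopped (hT : IsStoppingTime ℱ fun ω => (T ω : WithTop ℕ))
    (W : Ω → ι) {Ŵ : Ω → ι} (hŴ : Measurable Ŵ) :
    Measurable fun ω => posterior P (ℱ (T ω)) W (Ŵ ω) ω := by
  have hjoint : Measurable fun q : Ω × (ℕ × ι) => posterior P (ℱ q.2.1) W q.2.2 q.1 :=
    measurable_from_prod_countable_left fun q =>
      (stronglyMeasurable_condExp.measurable.mono (ℱ.le q.1) le_rfl :
        Measurable (posterior P (ℱ q.1) W q.2))
  exact hjoint.comp (measurable_id.prodMk (hT.measurable_of_coe.prodMk hŴ))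

theorem integrable_posterior_stopped [IsFiniteMeasure P]
    (hT : IsStoppingTime ℱ fun ω => (T ω : WithTop ℕ)) {W : Ω → ι} (hW : Measurable W)
    {Ŵ : Ω → ι} (hŴ : Measurable Ŵ) :
    Integrable (fun ω => posterior P (ℱ (T ω)) W (Ŵ ω) ω) P := by
  refine Integrable.of_bound (measurable_posterior_stopped hT W hŴ).aestronglyMeasurable 1 ?_
  filter_upwards [ae_posterior_stopped_mem_stdSimplex (ℱ := ℱ) (T := T) hW] with ω hω
  rw [Real.norm_of_nonneg (hω.1 _)]
  exact (mem_Icc_of_mem_stdSimplex hω _).2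

theorem integral_posterior_stopped [IsFiniteMeasure P]
    (hT : IsStoppingTime ℱ fun ω => (T ω : WithTop ℕ)) {W : Ω → ι} (hW : Measurable W)
    {Ŵ : Ω → ι} (hŴ : Measurable[hT.measurableSpace] Ŵ) :
    ∫ ω, posterior P (ℱ (T ω)) W (Ŵ ω) ω ∂P = P.real {ω | W ω = Ŵ ω} := by
  have hŴm : Measurable Ŵ := hŴ.mono hT.measurableSpace_le le_rfl
  have hset : MeasurableSet {ω | W ω = Ŵ ω} := measurableSet_eq_fun hW hŴm
  rw [← integral_indicator_one hset]
  refine integral_eq_of_setIntegral_fiber_eq (hT.measurable_of_coe.prodMk hŴm)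
    (integrable_posterior_stopped hT hW hŴm) ((integrable_const 1).indicator hset)
    fun ⟨t, a⟩ => ?_
  set fiber := (fun ω => (T ω, Ŵ ω)) ⁻¹' {(t, a)}
  have hfiber : MeasurableSet[ℱ t] fiber := by
    have heq : fiber = Ŵ ⁻¹' {a} ∩ {ω | (T ω : WithTop ℕ) = t} := by
      ext ω
      simp [fiber, and_comm]
    rw [heq]
    exact (hT.measurableSet_inter_eq_iff _ t).1
      ((hŴ (measurableSet_singleton a)).inter (hT.measurableSet_eq_of_countable' t))
  have hon_fiber : ∀ ω ∈ fiber, T ω = t ∧ Ŵ ω = a := fun ω hω => Prod.mk.inj hω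
  calc ∫ ω in fiber, posterior P (ℱ (T ω)) W (Ŵ ω) ω ∂P
      = ∫ ω in fiber, posterior P (ℱ t) W a ω ∂P :=
        setIntegral_congr_fun (ℱ.le t _ hfiber) fun ω hω => by
          rw [(hon_fiber ω hω).1, (hon_fiber ω hω).2]
    _ = ∫ ω in fiber, {ω | W ω = a}.indicator 1 ω ∂P :=
        setIntegral_condExp (ℱ.le t)
          ((integrable_const 1).indicator (hW (measurableSet_singleton a))) hfiber
    _ = ∫ ω in fiber, {ω | W ω = Ŵ ω}.indicator 1 ω ∂P :=
        setIntegral_congr_fun (ℱ.le t _ hfiber) fun ω hω => by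
          obtain ⟨-, rfl⟩ := hon_fiber ω hω
          rfl

theorem integral_one_sub_posterior_stopped [IsProbabilityMeasure P]
    (hT : IsStoppingTime ℱ fun ω => (T ω : WithTop ℕ)) {W : Ω → ι} (hW : Measurable W)
    {Ŵ : Ω → ι} (hŴ : Measurable[hT.measurableSpace] Ŵ) :
    ∫ ω, 1 - posterior P (ℱ (T ω)) W (Ŵ ω) ω ∂P = P.real {ω | Ŵ ω ≠ W ω} := by
  have hŴm : Measurable Ŵ := hŴ.mono hT.measurableSpace_le le_rfl
  have hwrong : {ω | Ŵ ω ≠ W ω} = {ω | W ω = Ŵ ω}ᶜ := by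
    ext ω
    simp [eq_comm]
  rw [integral_sub (integrable_const 1) (integrable_posterior_stopped hT hW hŴm),
    integral_posterior_stopped hT hW hŴ, hwrong, measureReal_compl (measurableSet_eq_fun hW hŴm)]
  simp

end Posterior

theorem stmt1_general {Ω : Type*} {m0 : MeasurableSpace Ω} {P : Measure Ω} [IsProbabilityMeasure P]
    (ℱ : Filtration ℕ m0) (M : ℕ)
    (W : Ω → Fin M) (hW : Measurable W)
    (T : Ω → ℕ) (hT : IsStoppingTime ℱ (fun ω => (T ω : WithTop ℕ)))
    (Pi : ℕ → Fin M → Ω → ℝ)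
    (hPi : ∀ t i, Pi t i =ᵐ[P] P[Set.indicator {ω | W ω = i} (fun _ => (1 : ℝ)) | ℱ t])
    (H : ℕ → Ω → ℝ)
    (hH : ∀ t ω, H t ω = -∑ i : Fin M, Pi t i ω * Real.log (Pi t i ω))
    (What : Ω → Fin M) (hWhat : Measurable[hT.measurableSpace] What)
    (Pe : ℝ) (hPe : Pe = (P {ω | What ω ≠ W ω}).toReal) :
    ∫ ω, H (T ω) ω ∂P ≤
      (-(Pe * Real.log Pe) - (1 - Pe) * Real.log (1 - Pe)) + Pe * Real.log (M - 1) := by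
  set Q : Fin M → Ω → ℝ := fun i ω => posterior P (ℱ (T ω)) W i ω
  have hQ : ∀ᵐ ω ∂P, (fun i => Q i ω) ∈ stdSimplex ℝ (Fin M) ∧
      H (T ω) ω = ∑ i, Real.negMulLog (Q i ω) := by
    filter_upwards [ae_posterior_stopped_mem_stdSimplex (ℱ := ℱ) (T := T) hW,
      ae_all_iff.2 fun t => ae_all_iff.2 (hPi t)] with ω hsimplex hPiQ
    refine ⟨hsimplex, ?_⟩
    simp only [hH, hPiQ, Q, posterior, Real.negMulLog, neg_mul, Finset.sum_neg_distrib]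
  have hE01 : ∀ᵐ ω ∂P, 1 - Q (What ω) ω ∈ Set.Icc 0 1 := by
    filter_upwards [hQ] with ω hω
    have := mem_Icc_of_mem_stdSimplex hω.1 (What ω)
    constructor <;> linarith [this.1, this.2]
  have hH0 : ∀ᵐ ω ∂P, 0 ≤ H (T ω) ω := by
    filter_upwards [hQ] with ω hω
    rw [hω.2]
    exact Finset.sum_nonneg fun i _ => Real.negMulLog_nonneg
      (mem_Icc_of_mem_stdSimplex hω.1 i).1 (mem_Icc_of_mem_stdSimplex hω.1 i).2
  have hHT : ∀ᵐ ω ∂P, H (T ω) ω ≤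
      Real.binEntropy (1 - Q (What ω) ω) + (1 - Q (What ω) ω) * Real.log (M - 1) := by
    filter_upwards [hQ] with ω hω
    simpa [hω.2] using Real.sum_negMulLog_le_binEntropy_add_mul_log hω.1 (What ω)
  have hfano := Real.integral_le_binEntropy_integral_add_mul (Y := fun ω => 1 - Q (What ω) ω) _
    hH0 ((integrable_const 1).sub (integrable_posterior_stopped hT hW
      (hWhat.mono hT.measurableSpace_le le_rfl))) hE01 hHT
  rw [integral_one_sub_posterior_stopped hT hW hWhat, measureReal_def, ← hPe,
    Real.binEntropy_eq_negMulLog_add_negMulLog_one_sub] at hfano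
  simpa only [Real.negMulLog, neg_mul, sub_eq_add_neg] using hfano

/-- Generalized Fano inequality: `E[H_T] ≤ h(P_e) + P_e log(M-1)`. -/
theorem stmt1 {Ω : Type*} {m0 : MeasurableSpace Ω} {P : Measure Ω} [IsProbabilityMeasure P]
    (ℱ : Filtration ℕ m0) (M : ℕ) (hM : 2 ≤ M)
    (W : Ω → Fin M) (hW : Measurable W)
    (hunif : ∀ i : Fin M, P {ω | W ω = i} = 1 / M)
    (T : Ω → ℕ) (hT : IsStoppingTime ℱ (fun ω => (T ω : WithTop ℕ)))
    (Pi : ℕ → Fin M → Ω → ℝ)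
    (hPi : ∀ t i, Pi t i =ᵐ[P] P[Set.indicator {ω | W ω = i} (fun _ => (1 : ℝ)) | ℱ t])
    (H : ℕ → Ω → ℝ)
    (hH : ∀ t ω, H t ω = -∑ i : Fin M, Pi t i ω * Real.log (Pi t i ω))
    (What : Ω → Fin M) (hWhat : Measurable[hT.measurableSpace] What)
    (Pe : ℝ) (hPe : Pe = (P {ω | What ω ≠ W ω}).toReal) :
    ∫ ω, H (T ω) ω ∂P ≤
      (-(Pe * Real.log Pe) - (1 - Pe) * Real.log (1 - Pe)) + Pe * Real.log (M - 1) :=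
  stmt1_general ℱ M W hW T hT Pi hPi H hH What hWhat Pe hPe
end

section
/- Let K_1, K_2, K_3, H* be positive reals with K_2 > K_1, and λ > 0. Define f(y) = (1 − e^{λy})/(K_2 λ). Then for all sufficiently small λ > 0, the following four inequalities hold simultaneously: (i) (H*/K_1)(e^y − 1) < y/K_2 + f(y) for all y ∈ (−K_3, 0); (ii) (H*/K_1)(e^y − 1) > y/K_2 + f(y) for all y ∈ (0, K_3); (iii) 1/K_2 + f'(y) > 0 for all y ∈ (−K_3, 0); (iv) 1 − (λ e^{λ K_3}/(2K_2)) K_3² > 0. -/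
/-!
Write `f y = (1 - e^{λy}) / (K₂ λ)`, so that `y / K₂ + f y = (1 + λy - e^{λy}) / (K₂ λ)`.
Since `e^x ≥ 1 + x`, this is `≤ 0` for every `y`, which gives (ii) because `e^y - 1 > 0` for
`y > 0`; and `1 / K₂ + f' y = (1 - e^{λy}) / K₂ > 0` for `y < 0`, which is (iii).
For `y < 0` the second-order bound `e^x ≤ 1 + x + x² / 2` (`x ≤ 0`) gives
`y / K₂ + f y ≥ -λ y² / (2 K₂) ≥ λ K₃ y / (2 K₂)` on `(-K₃, 0)`, while by convexity
`(H* / K₁) (e^y - 1) < (H* / K₁) y e^y ≤ (H* / K₁) e^{-K₃} y` there; so (i) holds as soon as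
`λ K₃ ≤ 2 K₂ (H* / K₁) e^{-K₃}`. Finally (iv) holds for small `λ` by continuity at `λ = 0`.
-/

open Real Filter Topology

theorem exp_le_quadratic_of_nonpos {x : ℝ} (hx : x ≤ 0) : exp x ≤ 1 + x + x ^ 2 / 2 := by
  -- `(1 + x + x²/2) (1 - x + x²/2) = 1 + x⁴/4 ≥ 1 = e^x e^{-x}`, and `e^{-x} ≥ 1 - x + x²/2`.
  have h := quadratic_le_exp_of_nonneg (neg_nonneg.2 hx)
  have hinv : exp x * exp (-x) = 1 := by rw [← exp_add, add_neg_cancel, exp_zero]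
  nlinarith [mul_le_mul_of_nonneg_left h (exp_pos x).le, sq_nonneg (x ^ 2), sq_nonneg (x + 1)]

theorem exp_sub_one_lt_mul_exp {y : ℝ} (hy : y ≠ 0) : exp y - 1 < y * exp y := by
  have h := mul_lt_mul_of_pos_right (add_one_lt_exp (neg_ne_zero.2 hy)) (exp_pos y)
  rw [← exp_add, neg_add_cancel, exp_zero] at h
  linarith

/-- The function `f` of the paper, with `a = K₂`. -/
noncomputable def scaledOneSubExp (a lam y : ℝ) : ℝ := (1 - exp (lam * y)) / (a * lam)

section

variable {a lam : ℝ}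

theorem div_add_scaledOneSubExp (ha : 0 < a) (hlam : 0 < lam) (y : ℝ) :
    y / a + scaledOneSubExp a lam y = (1 + lam * y - exp (lam * y)) / (a * lam) := by
  unfold scaledOneSubExp
  field_simp
  ring

theorem div_add_scaledOneSubExp_nonpos (ha : 0 < a) (hlam : 0 < lam) (y : ℝ) :
    y / a + scaledOneSubExp a lam y ≤ 0 := by
  rw [div_add_scaledOneSubExp ha hlam]
  exact div_nonpos_of_nonpos_of_nonneg (by linarith [add_one_le_exp (lam * y)]) (by positivity)

theorem neg_mul_sq_div_le_div_add_scaledOneSubExp (ha : 0 < a) (hlam : 0 < lam) {y : ℝ}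
    (hy : y ≤ 0) : -(lam * y ^ 2 / (2 * a)) ≤ y / a + scaledOneSubExp a lam y := by
  have hquad := exp_le_quadratic_of_nonpos (mul_nonpos_of_nonneg_of_nonpos hlam.le hy)
  rw [div_add_scaledOneSubExp ha hlam, le_div_iff₀ (by positivity)]
  have : -(lam * y ^ 2 / (2 * a)) * (a * lam) = -((lam * y) ^ 2 / 2) := by
    field_simp
  linarith

theorem hasDerivAt_scaledOneSubExp (ha : 0 < a) (hlam : 0 < lam) (y : ℝ) :
    HasDerivAt (scaledOneSubExp a lam) (-exp (lam * y) / a) y := by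
  have h := (((hasDerivAt_id y).const_mul lam).exp.const_sub 1).div_const (a * lam)
  simp only [id, mul_one] at h
  exact h.congr_deriv (by field_simp)

theorem one_div_add_deriv_scaledOneSubExp_pos (ha : 0 < a) (hlam : 0 < lam) {y : ℝ}
    (hy : y < 0) : 0 < 1 / a + deriv (scaledOneSubExp a lam) y := by
  rw [(hasDerivAt_scaledOneSubExp ha hlam y).deriv, ← add_div, ← sub_eq_add_neg]
  exact div_pos (sub_pos.2 (exp_lt_one_iff.2 (mul_neg_of_pos_of_neg hlam hy))) ha

variable {κ : ℝ}

theorem div_add_scaledOneSubExp_lt_mul_exp_sub_one (hκ : 0 < κ) (ha : 0 < a) (hlam : 0 < lam)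
    {y : ℝ} (hy : 0 < y) : y / a + scaledOneSubExp a lam y < κ * (exp y - 1) :=
  (div_add_scaledOneSubExp_nonpos ha hlam y).trans_lt
    (mul_pos hκ (sub_pos.2 (one_lt_exp_iff.2 hy)))

theorem mul_exp_sub_one_lt_div_add_scaledOneSubExp (hκ : 0 < κ) (ha : 0 < a) (hlam : 0 < lam)
    {K y : ℝ} (hsmall : lam * K ≤ 2 * a * κ * exp (-K)) (hKy : -K < y) (hy : y < 0) :
    κ * (exp y - 1) < y / a + scaledOneSubExp a lam y := by
  have hexp : exp (-K) ≤ exp y := exp_le_exp.2 hKy.le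
  have hsq : y ^ 2 ≤ -K * y := by nlinarith
  calc κ * (exp y - 1) < κ * (y * exp y) :=
        mul_lt_mul_of_pos_left (exp_sub_one_lt_mul_exp hy.ne) hκ
    _ ≤ κ * exp (-K) * y := by
        nlinarith [mul_le_mul_of_nonpos_left hexp hy.le]
    _ ≤ lam * K * y / (2 * a) := by
        rw [le_div_iff₀ (by positivity)]
        nlinarith
    _ ≤ -(lam * y ^ 2 / (2 * a)) := by
        rw [← neg_div, div_le_div_iff_of_pos_right (by positivity)]
        nlinarith
    _ ≤ y / a + scaledOneSubExp a lam y := neg_mul_sq_div_le_div_add_scaledOneSubExp ha hlam hy.le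

end

theorem exists_forall_Ioc_of_eventually_nhdsGT {p : ℝ → Prop} (h : ∀ᶠ x in 𝓝[>] 0, p x) :
    ∃ x₀ > 0, ∀ x, 0 < x → x ≤ x₀ → p x := by
  obtain ⟨x₀, hx₀, hp⟩ := (nhdsGT_basis_Ioc 0).eventually_iff.1 h
  exact ⟨x₀, hx₀, fun x hx hxx₀ => hp ⟨hx, hxx₀⟩⟩

theorem stmt4_general (K₁ K₂ K₃ Hstar : ℝ) (hK₁ : 0 < K₁) (hK₂ : 0 < K₂)
    (hHs : 0 < Hstar) :
    ∃ lam₀ > 0, ∀ lam : ℝ, 0 < lam → lam ≤ lam₀ →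
      (∀ y : ℝ, -K₃ < y → y < 0 →
          Hstar / K₁ * (exp y - 1) < y / K₂ + (1 - exp (lam * y)) / (K₂ * lam)) ∧
      (∀ y : ℝ, 0 < y → y < K₃ →
          Hstar / K₁ * (exp y - 1) > y / K₂ + (1 - exp (lam * y)) / (K₂ * lam)) ∧
      (∀ y : ℝ, -K₃ < y → y < 0 →
          0 < 1 / K₂ + deriv (fun z => (1 - exp (lam * z)) / (K₂ * lam)) y) ∧
      (0 < 1 - lam * exp (lam * K₃) / (2 * K₂) * K₃ ^ 2) := by
  have hκ : 0 < Hstar / K₁ := div_pos hHs hK₁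
  have hsmall : ∀ᶠ lam in 𝓝[>] 0, lam * K₃ < 2 * K₂ * (Hstar / K₁) * exp (-K₃) :=
    eventually_nhdsWithin_of_eventually_nhds <|
      ContinuousAt.eventually_lt (by fun_prop) continuousAt_const (by rw [zero_mul]; positivity)
  have hiv : ∀ᶠ lam in 𝓝[>] 0, 0 < 1 - lam * exp (lam * K₃) / (2 * K₂) * K₃ ^ 2 :=
    eventually_nhdsWithin_of_eventually_nhds <|
      ContinuousAt.eventually_lt continuousAt_const (by fun_prop) (by simp)
  refine exists_forall_Ioc_of_eventually_nhdsGT ?_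
  filter_upwards [self_mem_nhdsWithin, hsmall, hiv] with lam hlam hsmall hiv
  exact ⟨fun y hKy hy => mul_exp_sub_one_lt_div_add_scaledOneSubExp hκ hK₂ hlam hsmall.le hKy hy,
    fun y hy _ => div_add_scaledOneSubExp_lt_mul_exp_sub_one hκ hK₂ hlam hy,
    fun y _ hy => one_div_add_deriv_scaledOneSubExp_pos hK₂ hlam hy, hiv⟩

/-- For all sufficiently small `λ > 0`, the four inequalities used in the
submartingale construction hold simultaneously, where `f y = (1 - e^{λ y})/(K₂ λ)`. -/
theorem stmt4 (K₁ K₂ K₃ Hstar : ℝ) (hK₁ : 0 < K₁) (hK₂ : 0 < K₂) (hK₃ : 0 < K₃)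
    (hHs : 0 < Hstar) (hK : K₁ < K₂) :
    ∃ lam₀ > 0, ∀ lam : ℝ, 0 < lam → lam ≤ lam₀ →
      (∀ y : ℝ, -K₃ < y → y < 0 →
          Hstar / K₁ * (exp y - 1) < y / K₂ + (1 - exp (lam * y)) / (K₂ * lam)) ∧
      (∀ y : ℝ, 0 < y → y < K₃ →
          Hstar / K₁ * (exp y - 1) > y / K₂ + (1 - exp (lam * y)) / (K₂ * lam)) ∧
      (∀ y : ℝ, -K₃ < y → y < 0 →
          0 < 1 / K₂ + deriv (fun z => (1 - exp (lam * z)) / (K₂ * lam)) y) ∧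
      (0 < 1 - lam * exp (lam * K₃) / (2 * K₂) * K₃ ^ 2) :=
  stmt4_general K₁ K₂ K₃ Hstar hK₁ hK₂ hHs
end

section
/- If the channel kernel Q(y|x,s) is strictly positive on a finite alphabet, i.e., Q(y|x,s) ≥ q_min > 0 for all (y,x,s), then the one-step change in the log posterior entropy is bounded: there exists a constant C_2 (depending only on q_min and the alphabet sizes) such that |log H_{t+1} − log H_t| ≤ C_2 almost surely whenever H_t > 0, where H_t is the conditional entropy of the message W given the observations up to time t and the Bayes posterior update uses kernel Q. -/
/-!
Bayes' rule with likelihoods in `[c, 1]` moves every posterior weight by a factor between `c` and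
`1 / c`, in both directions. Entropy is stable under such perturbations multiplicatively and not
only additively: a coordinate `x ≤ 1/2` satisfies `x ≤ 2 (-x log x)`, which absorbs the
`x log (1/c)` error of the naive comparison, while for the coordinate `x > 1/2` the term
`-y log y ≤ 1 - y` is controlled by the mass of the other coordinates, `1 - x ≤ 2 (-x log x)`.
Hence `H_{t+1} ≤ K H_t` and `H_t ≤ K H_{t+1}` with `K = 2 (1 - log c) / c`, so
`|log H_{t+1} - log H_t| ≤ log K`.
-/

open Finset Real

theorem mul_one_sub_le_negMulLog {x : ℝ} (hx : 0 ≤ x) : x * (1 - x) ≤ negMulLog x := by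
  rcases hx.eq_or_lt with rfl | hx
  · simp
  · rw [negMulLog, neg_mul, ← mul_neg]
    exact mul_le_mul_of_nonneg_left (by linarith [log_le_sub_one_of_pos hx]) hx.le

theorem mul_negMulLog_le_of_mul_le {c x y : ℝ} (hc : 0 < c) (hx : 0 ≤ x) (hy1 : y ≤ 1)
    (hxy : c * x ≤ y) (hyx : c * y ≤ x) :
    c * negMulLog y ≤ negMulLog x - x * log c := by
  have hlogy : 0 ≤ -log y := neg_nonneg.mpr (log_nonpos ((mul_nonneg hc.le hx).trans hxy) hy1)
  have hlog : x * -log y ≤ x * -log (c * x) := by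
    rcases hx.eq_or_lt with rfl | hx
    · simp
    · exact mul_le_mul_of_nonneg_left
        (neg_le_neg (log_le_log (by positivity) hxy)) hx.le
  calc c * negMulLog y = c * y * -log y := by rw [negMulLog]; ring
    _ ≤ x * -log y := mul_le_mul_of_nonneg_right hyx hlogy
    _ ≤ x * -log (c * x) := hlog
    _ = negMulLog x - x * log c := by
      rcases hx.eq_or_lt with rfl | hx
      · simp
      · rw [log_mul hc.ne' hx.ne', negMulLog]; ring

/-- The hypothesis `c * (1 - y) ≤ 1 - x` is where the other coordinates of a probability vector
enter: it controls `y` when `x` carries most of the mass. -/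
theorem negMulLog_le_mul_negMulLog {c x y : ℝ} (hc0 : 0 < c) (hc1 : c ≤ 1)
    (hx0 : 0 ≤ x) (hx1 : x ≤ 1) (hy1 : y ≤ 1)
    (hxy : c * x ≤ y) (hyx : c * y ≤ x) (hcompl : c * (1 - y) ≤ 1 - x) :
    negMulLog y ≤ 2 * (1 - log c) / c * negMulLog x := by
  have hy0 : 0 ≤ y := le_trans (by positivity) hxy
  have hlogc : log c ≤ 0 := log_nonpos hc0.le hc1
  have hHx : 0 ≤ negMulLog x := negMulLog_nonneg hx0 hx1
  have hquad := mul_one_sub_le_negMulLog hx0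
  rw [div_mul_eq_mul_div, le_div_iff₀ hc0]
  rcases le_or_gt x (1 / 2) with hx | hx
  · have hx2 : x ≤ 2 * negMulLog x := by nlinarith
    calc negMulLog y * c ≤ negMulLog x + x * -log c := by
          linarith [mul_negMulLog_le_of_mul_le hc0 hx0 hy1 hxy hyx]
      _ ≤ negMulLog x + 2 * negMulLog x * -log c := by
          gcongr
          linarith
      _ ≤ 2 * (1 - log c) * negMulLog x := by nlinarith
  · calc negMulLog y * c ≤ (1 - y) * c := by
          gcongr
          exact negMulLog_le_one_sub_self hy0
      _ ≤ 2 * negMulLog x := by nlinarith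
      _ ≤ 2 * (1 - log c) * negMulLog x := by nlinarith

theorem sum_negMulLog_le_mul_sum_negMulLog {ι : Type*} [Fintype ι] {c : ℝ}
    (hc0 : 0 < c) (hc1 : c ≤ 1) {p q : ι → ℝ} (hp : p ∈ stdSimplex ℝ ι)
    (hq : q ∈ stdSimplex ℝ ι) (hpq : ∀ i, c * p i ≤ q i) (hqp : ∀ i, c * q i ≤ p i) :
    ∑ i, negMulLog (q i) ≤ 2 * (1 - log c) / c * ∑ i, negMulLog (p i) := by
  classical
  rw [mul_sum]
  refine sum_le_sum fun i _ => negMulLog_le_mul_negMulLog hc0 hc1 (hp.1 i)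
    (stdSimplex.le_one ⟨p, hp⟩ i) (stdSimplex.le_one ⟨q, hq⟩ i) (hpq i) (hqp i) ?_
  have hrest : ∀ f ∈ stdSimplex ℝ ι, 1 - f i = ∑ j ∈ univ.erase i, f j := fun f hf => by
    rw [sum_erase_eq_sub (mem_univ i), hf.2]
  rw [hrest p hp, hrest q hq, mul_sum]
  exact sum_le_sum fun j _ => hqp j

theorem abs_log_sub_log_le_log_of_le_mul {a b K : ℝ} (ha : 0 < a) (hb : 0 ≤ b)
    (hab : a ≤ K * b) (hba : b ≤ K * a) : |log b - log a| ≤ log K := by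
  have hKb : 0 < K * b := ha.trans_le hab
  have hb : 0 < b := lt_of_le_of_ne hb (by rintro rfl; simp at hKb)
  have hK : 0 < K := pos_of_mul_pos_left hKb hb.le
  have h₁ := log_le_log hb hba
  have h₂ := log_le_log ha hab
  rw [log_mul hK.ne' ha.ne'] at h₁
  rw [log_mul hK.ne' hb.ne'] at h₂
  rw [abs_le]
  constructor <;> linarith

section Bayes

variable {ι : Type*} [Fintype ι]

noncomputable def bayesUpdate (p L : ι → ℝ) : ι → ℝ :=
  fun i => p i * L i / ∑ j, p j * L j

variable {c : ℝ} {p L : ι → ℝ}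

theorem sum_mul_likelihood_mem_Icc (hp : p ∈ stdSimplex ℝ ι) (hL : ∀ i, L i ∈ Set.Icc c 1) :
    ∑ j, p j * L j ∈ Set.Icc c 1 := by
  constructor
  · calc c = ∑ j, p j * c := by rw [← sum_mul, hp.2, one_mul]
      _ ≤ ∑ j, p j * L j := sum_le_sum fun j _ => mul_le_mul_of_nonneg_left (hL j).1 (hp.1 j)
  · calc ∑ j, p j * L j ≤ ∑ j, p j := sum_le_sum fun j _ => mul_le_of_le_one_right (hp.1 j) (hL j).2
      _ = 1 := hp.2

theorem bayesUpdate_mem_stdSimplex (hc : 0 < c) (hp : p ∈ stdSimplex ℝ ι)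
    (hL : ∀ i, L i ∈ Set.Icc c 1) : bayesUpdate p L ∈ stdSimplex ℝ ι := by
  have hS := (sum_mul_likelihood_mem_Icc hp hL).1
  refine ⟨fun i => div_nonneg (mul_nonneg (hp.1 i) (hc.le.trans (hL i).1)) (hc.le.trans hS), ?_⟩
  simp only [bayesUpdate]
  rw [← sum_div, div_self (hc.trans_le hS).ne']

theorem mul_le_bayesUpdate (hc : 0 < c) (hp : p ∈ stdSimplex ℝ ι)
    (hL : ∀ i, L i ∈ Set.Icc c 1) (i : ι) : c * p i ≤ bayesUpdate p L i := by
  obtain ⟨hSc, hS1⟩ := sum_mul_likelihood_mem_Icc hp hL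
  calc c * p i ≤ p i * L i := by rw [mul_comm]; exact mul_le_mul_of_nonneg_left (hL i).1 (hp.1 i)
    _ ≤ bayesUpdate p L i :=
      le_div_self (mul_nonneg (hp.1 i) (hc.le.trans (hL i).1)) (hc.trans_le hSc) hS1

theorem mul_bayesUpdate_le (hc : 0 < c) (hp : p ∈ stdSimplex ℝ ι)
    (hL : ∀ i, L i ∈ Set.Icc c 1) (i : ι) : c * bayesUpdate p L i ≤ p i := by
  obtain ⟨hSc, -⟩ := sum_mul_likelihood_mem_Icc hp hL
  rw [bayesUpdate, mul_div_assoc', div_le_iff₀ (hc.trans_le hSc)]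
  exact mul_le_mul (mul_le_of_le_one_right (hp.1 i) (hL i).2) hSc hc.le (hp.1 i)
    |>.trans_eq' (by ring)

end Bayes

theorem stmt11_general (qmin : ℝ) (hq0 : 0 < qmin) (hq1 : qmin ≤ 1) (M : ℕ) :
    ∃ C₂ : ℝ, ∀ (Pi : ℕ → Fin M → ℝ) (L : ℕ → Fin M → ℝ),
      (∀ i, 0 ≤ Pi 0 i) → (∑ i, Pi 0 i = 1) →
      (∀ t i, qmin ≤ L t i ∧ L t i ≤ 1) →
      (∀ t i, Pi (t + 1) i = Pi t i * L t i / ∑ j, Pi t j * L t j) →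
      ∀ t : ℕ, 0 < -∑ i, Pi t i * Real.log (Pi t i) →
        |Real.log (-∑ i, Pi (t + 1) i * Real.log (Pi (t + 1) i)) -
            Real.log (-∑ i, Pi t i * Real.log (Pi t i))| ≤ C₂ := by
  refine ⟨log (2 * (1 - log qmin) / qmin), fun Pi L h0 hsum hL hrec t hH => ?_⟩
  have hstep : ∀ s, Pi (s + 1) = bayesUpdate (Pi s) (L s) := fun s => funext (hrec s)
  have hsimplex : ∀ s, Pi s ∈ stdSimplex ℝ (Fin M) := by
    intro s
    induction s with
    | zero => exact ⟨h0, hsum⟩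
    | succ s ih => rw [hstep]; exact bayesUpdate_mem_stdSimplex hq0 ih (hL s)
  have hentropy : ∀ p : Fin M → ℝ, -∑ i, p i * log (p i) = ∑ i, negMulLog (p i) := by
    simp [negMulLog_eq_neg]
  simp only [hentropy, hstep] at hH ⊢
  have hp := hsimplex t
  have hq := bayesUpdate_mem_stdSimplex hq0 hp (hL t)
  have hpq := mul_le_bayesUpdate hq0 hp (hL t)
  have hqp := mul_bayesUpdate_le hq0 hp (hL t)
  exact abs_log_sub_log_le_log_of_le_mul hH
    (sum_nonneg fun i _ => negMulLog_nonneg (hq.1 i) (stdSimplex.le_one ⟨_, hq⟩ i))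
    (sum_negMulLog_le_mul_sum_negMulLog hq0 hq1 hq hp hqp hpq)
    (sum_negMulLog_le_mul_sum_negMulLog hq0 hq1 hp hq hpq hqp)

/-- If the Bayes update likelihoods are bounded in `[q_min, 1]` with `q_min > 0`,
then the one-step change of the log posterior entropy is bounded by a constant
depending only on `q_min` and the alphabet size. -/
theorem stmt11 (qmin : ℝ) (hq0 : 0 < qmin) (hq1 : qmin ≤ 1) (M : ℕ) (hM : 2 ≤ M) :
    ∃ C₂ : ℝ, ∀ (Pi : ℕ → Fin M → ℝ) (L : ℕ → Fin M → ℝ),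
      (∀ i, 0 ≤ Pi 0 i) → (∑ i, Pi 0 i = 1) →
      (∀ t i, qmin ≤ L t i ∧ L t i ≤ 1) →
      (∀ t i, Pi (t + 1) i = Pi t i * L t i / ∑ j, Pi t j * L t j) →
      ∀ t : ℕ, 0 < -∑ i, Pi t i * Real.log (Pi t i) →
        |Real.log (-∑ i, Pi (t + 1) i * Real.log (Pi (t + 1) i)) -
            Real.log (-∑ i, Pi t i * Real.log (Pi t i))| ≤ C₂ :=
  stmt11_general qmin hq0 hq1 M
end
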